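/- arXiv:math/0701437 — 4 statements merged into one kernel-verified Lean document; each statement's English description precedes it below -/
import Mathlib

section
/- |h − c(1 + V₀)| ≤ r₀³ (V₀')² / (2(1 + V₀)). -/
/-!
At an interior maximum `z₀` the derivative of `v = r (1 + V)` vanishes, which gives
`z₀ (1 + V₀) = r₀² V₀'`. Since `r₀² + z₀² = c²`, the defect `c - r₀` equals `z₀² / (c + r₀) ≤ z₀² / (2 r₀)`,
and substituting `z₀ = r₀² V₀' / (1 + V₀)` yields the bound.
-/

open Real Set

lemma hasDerivAt_sqrt_sq_sub_sq {c x : ℝ} (hx : x ^ 2 < c ^ 2) :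
    HasDerivAt (fun y => √(c ^ 2 - y ^ 2)) (-x / √(c ^ 2 - x ^ 2)) x := by
  have hinner : HasDerivAt (fun y : ℝ => c ^ 2 - y ^ 2) (-(2 * x)) x := by
    simpa using (hasDerivAt_pow 2 x).const_sub (c ^ 2)
  refine (hinner.sqrt (sub_ne_zero.mpr hx.ne')).congr_deriv ?_
  have hs : √(c ^ 2 - x ^ 2) ≠ 0 := (sqrt_pos.mpr (sub_pos.mpr hx)).ne'
  field_simp

lemma mul_one_add_eq_of_isLocalMax_sqrt_mul {c z W : ℝ} {V : ℝ → ℝ} (hz : z ^ 2 < c ^ 2)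
    (hV : HasDerivAt V W z) (hmax : IsLocalMax (fun x => √(c ^ 2 - x ^ 2) * (1 + V x)) z) :
    z * (1 + V z) = (c ^ 2 - z ^ 2) * W := by
  have hs : 0 < √(c ^ 2 - z ^ 2) := sqrt_pos.mpr (sub_pos.mpr hz)
  have hcrit := hmax.hasDerivAt_eq_zero ((hasDerivAt_sqrt_sq_sub_sq hz).mul (hV.const_add 1))
  rw [← sq_sqrt (sub_pos.mpr hz).le]
  field_simp at hcrit
  linarith

lemma abs_mul_sub_mul_le_of_sq_add_sq {c r z A W : ℝ} (hc : 0 ≤ c) (hr : 0 < r) (hA : 0 < A)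
    (hrz : r ^ 2 + z ^ 2 = c ^ 2) (hcrit : z * A = r ^ 2 * W) :
    |r * A - c * A| ≤ r ^ 3 * W ^ 2 / (2 * A) := by
  have hrc : r ≤ c := by nlinarith
  -- `(c - r) · 2r ≤ c² - r²` is `0 ≤ (c - r)²`
  have hdefect : (c - r) * (2 * r) ≤ z ^ 2 := by nlinarith [sq_nonneg (c - r)]
  have hz_sq : z ^ 2 * A ^ 2 = r ^ 4 * W ^ 2 := by
    rw [← mul_pow, hcrit]; ring
  rw [← sub_mul, abs_mul, abs_of_nonpos (sub_nonpos.mpr hrc), abs_of_pos hA,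
    le_div_iff₀ (by positivity)]
  nlinarith [mul_le_mul_of_nonneg_right hdefect (sq_nonneg A)]

theorem stmt_2_general
    (c : ℝ)
    (V V' : ℝ → ℝ)
    (hV1 : ∀ x ∈ Set.Icc (-c) c, HasDerivAt V (V' x) x)
    (hVnn : ∀ x ∈ Set.Icc (-c) c, 0 ≤ V x)
    (r v : ℝ → ℝ)
    (hr : ∀ x, r x = Real.sqrt (c ^ 2 - x ^ 2))
    (hv : ∀ x, v x = r x * (1 + V x))
    (z₀ : ℝ) (hz₀ : z₀ ∈ Set.Ioo (-c) c)
    (hmax : ∀ x ∈ Set.Icc (-c) c, v x ≤ v z₀)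
    :
    |v z₀ - c * (1 + V z₀)| ≤ (r z₀) ^ 3 * (V' z₀) ^ 2 / (2 * (1 + V z₀)) := by
  have hz₀' : z₀ ∈ Icc (-c) c := Ioo_subset_Icc_self hz₀
  have hz_sq : z₀ ^ 2 < c ^ 2 := sq_lt_sq' hz₀.1 hz₀.2
  have hv_eq : v = fun x => √(c ^ 2 - x ^ 2) * (1 + V x) := funext fun x => by rw [hv, hr]
  have hloc : IsLocalMax v z₀ :=
    Filter.eventually_of_mem (Icc_mem_nhds hz₀.1 hz₀.2) hmax
  have hcrit := mul_one_add_eq_of_isLocalMax_sqrt_mul hz_sq (hV1 z₀ hz₀') (hv_eq ▸ hloc)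
  have hr_pos : 0 < r z₀ := by rw [hr]; exact sqrt_pos.mpr (sub_pos.mpr hz_sq)
  have hr_sq : r z₀ ^ 2 = c ^ 2 - z₀ ^ 2 := by rw [hr, sq_sqrt (sub_pos.mpr hz_sq).le]
  rw [hv]
  exact abs_mul_sub_mul_le_of_sq_add_sq (z := z₀) (by linarith [hz₀.1, hz₀.2]) hr_pos
    (by linarith [hVnn z₀ hz₀']) (by linarith) (hr_sq ▸ hcrit)

theorem stmt_2
    (c : ℝ) (hc : 0 < c)
    (V V' V'' : ℝ → ℝ)
    (hV1 : ∀ x ∈ Set.Icc (-c) c, HasDerivAt V (V' x) x)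
    (hV2 : ∀ x ∈ Set.Icc (-c) c, HasDerivAt V' (V'' x) x)
    (hV2c : ContinuousOn V'' (Set.Icc (-c) c))
    (hVnn : ∀ x ∈ Set.Icc (-c) c, 0 ≤ V x)
    (r v : ℝ → ℝ)
    (hr : ∀ x, r x = Real.sqrt (c ^ 2 - x ^ 2))
    (hv : ∀ x, v x = r x * (1 + V x))
    (z₀ : ℝ) (hz₀ : z₀ ∈ Set.Ioo (-c) c)
    (hmax : ∀ x ∈ Set.Icc (-c) c, v x ≤ v z₀)
    :
    |v z₀ - c * (1 + V z₀)| ≤ (r z₀) ^ 3 * (V' z₀) ^ 2 / (2 * (1 + V z₀)) :=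
  stmt_2_general c V V' hV1 hVnn r v hr hv z₀ hz₀ hmax
end

section
/- |a − c h / 2| ≤ (c⁴/8)(M'' + 6 (M')²). -/
/-!
Expanding `V` to second order at `0`, the weight `√(c² - x²)` integrates to `π c² / 2` and kills
the linear term by oddness, so `a` is `(1 + V 0) c² / 2` up to `M'' c⁴ / (3π)`. For the height,
`c (1 + V 0) = v 0 ≤ h`, while the critical-point equation `z₀ (1 + V z₀) = (c² - z₀²) V' z₀`
gives `|z₀| ≤ c² M'`, whence `h ≤ c (1 + V z₀) ≤ c (1 + V 0) + c³ M'²`.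
-/

open Real Set intervalIntegral
open scoped Interval

theorem Function.Odd.intervalIntegral_neg_eq_zero {E : Type*} [NormedAddCommGroup E]
    [NormedSpace ℝ E] {f : ℝ → E} (hf : f.Odd) (c : ℝ) : ∫ x in -c..c, f x = 0 := by
  have h := integral_comp_neg (a := -c) (b := c) f
  simp only [neg_neg, hf.eq, intervalIntegral.integral_neg] at h
  have : IsAddTorsionFree E := .of_isTorsionFree ℝ E
  exact self_eq_neg.mp h.symm

theorem integral_sqrt_sq_sub_sq {c : ℝ} (hc : 0 ≤ c) :
    ∫ x in -c..c, √(c ^ 2 - x ^ 2) = π * c ^ 2 / 2 := by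
  have hscale : ∀ x : ℝ, √(c ^ 2 - (c * x) ^ 2) = c * √(1 - x ^ 2) := fun x => by
    rw [show c ^ 2 - (c * x) ^ 2 = c ^ 2 * (1 - x ^ 2) by ring, sqrt_mul (sq_nonneg c),
      sqrt_sq hc]
  have h := smul_integral_comp_mul_left (fun x => √(c ^ 2 - x ^ 2)) c (a := -1) (b := 1)
  simp only [hscale, intervalIntegral.integral_const_mul, integral_sqrt_one_sub_sq, mul_neg,
    mul_one, smul_eq_mul] at h
  rw [← h]
  ring

theorem abs_sub_sub_mul_le_of_abs_deriv_deriv_le {f f' f'' : ℝ → ℝ} {s : Set ℝ} {K a x : ℝ}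
    (hs : Convex ℝ s) (hf : ∀ t ∈ s, HasDerivAt f (f' t) t)
    (hf' : ∀ t ∈ s, HasDerivAt f' (f'' t) t) (hK : ∀ t ∈ s, |f'' t| ≤ K)
    (ha : a ∈ s) (hx : x ∈ s) :
    |f x - f a - f' a * (x - a)| ≤ K / 2 * (x - a) ^ 2 := by
  have hsub : uIcc a x ⊆ s := hs.ordConnected.uIcc_subset ha hx
  have hlip : ∀ t ∈ s, |f' t - f' a| ≤ K * |t - a| := fun t ht =>
    hs.norm_image_sub_le_of_norm_hasDerivWithin_le (fun y hy => (hf' y hy).hasDerivWithinAt)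
      hK ha ht
  have hf'int : IntervalIntegrable f' MeasureTheory.volume a x :=
    (HasDerivAt.continuousOn fun t ht => hf' t (hsub ht)).intervalIntegrable
  have hrepr : f x - f a - f' a * (x - a) = ∫ t in a..x, (f' t - f' a) := by
    rw [integral_sub hf'int intervalIntegrable_const,
      integral_eq_sub_of_hasDerivAt (fun t ht => hf t (hsub ht)) hf'int]
    simp [mul_comm]
  calc |f x - f a - f' a * (x - a)|
      = ‖∫ t in Ι a x, (f' t - f' a)‖ := by
        rw [hrepr, ← Real.norm_eq_abs, norm_integral_eq_norm_integral_uIoc]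
    _ ≤ ∫ t in Ι a x, K * |t - a| := by
        refine MeasureTheory.norm_integral_le_of_norm_le ?_ ?_
        · exact (continuous_const.mul (continuous_id.sub continuous_const).abs).integrableOn_uIoc
        · refine (MeasureTheory.ae_restrict_iff' measurableSet_uIoc).mpr (.of_forall fun t ht => ?_)
          exact hlip t (hsub (uIoc_subset_uIcc ht))
    _ = K / 2 * (x - a) ^ 2 := by
        rw [MeasureTheory.integral_const_mul]
        have := integral_pow_abs_sub_uIoc (a := a) (b := x) (n := 1)
        norm_num [sq_abs] at this
        rw [this]
        ring

theorem sqrt_sq_sub_sq_le {c : ℝ} (hc : 0 ≤ c) (x : ℝ) : √(c ^ 2 - x ^ 2) ≤ c :=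
  sqrt_le_iff.mpr ⟨hc, by nlinarith [sq_nonneg x]⟩

theorem abs_integral_sqrt_sq_sub_sq_mul_sub_le {c K : ℝ} {f f' f'' : ℝ → ℝ} (hc : 0 ≤ c)
    (hf : ∀ x ∈ Icc (-c) c, HasDerivAt f (f' x) x) (hf' : ∀ x ∈ Icc (-c) c, HasDerivAt f' (f'' x) x)
    (hK : ∀ x ∈ Icc (-c) c, |f'' x| ≤ K) :
    |(∫ x in -c..c, √(c ^ 2 - x ^ 2) * f x) - π * c ^ 2 / 2 * f 0| ≤ K * c ^ 4 / 3 := by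
  have hcc : -c ≤ c := by linarith
  have hw : Continuous fun x : ℝ => √(c ^ 2 - x ^ 2) := by fun_prop
  have hwf : IntervalIntegrable (fun x => √(c ^ 2 - x ^ 2) * f x) MeasureTheory.volume (-c) c :=
    (hw.continuousOn.mul (HasDerivAt.continuousOn hf)).intervalIntegrable_of_Icc hcc
  have hodd : Function.Odd fun x : ℝ => x * √(c ^ 2 - x ^ 2) := fun x => by
    simp only [neg_sq]; ring
  have hrepr : (∫ x in -c..c, √(c ^ 2 - x ^ 2) * f x) - π * c ^ 2 / 2 * f 0 =
      ∫ x in -c..c, √(c ^ 2 - x ^ 2) * (f x - f 0 - f' 0 * x) := by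
    have hsplit : ∀ x, √(c ^ 2 - x ^ 2) * (f x - f 0 - f' 0 * x) =
        √(c ^ 2 - x ^ 2) * f x - (f 0 * √(c ^ 2 - x ^ 2) + f' 0 * (x * √(c ^ 2 - x ^ 2))) :=
      fun x => by ring
    simp only [hsplit]
    rw [integral_sub hwf ((by fun_prop : Continuous _).intervalIntegrable _ _),
      integral_add ((by fun_prop : Continuous _).intervalIntegrable _ _)
        ((by fun_prop : Continuous _).intervalIntegrable _ _),
      intervalIntegral.integral_const_mul, intervalIntegral.integral_const_mul,
      integral_sqrt_sq_sub_sq hc, hodd.intervalIntegral_neg_eq_zero]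
    ring
  rw [hrepr, ← Real.norm_eq_abs]
  calc ‖∫ x in -c..c, √(c ^ 2 - x ^ 2) * (f x - f 0 - f' 0 * x)‖
      ≤ ∫ x in -c..c, c * (K / 2 * x ^ 2) := by
        refine norm_integral_le_of_norm_le hcc (.of_forall fun x hx => ?_)
          ((by fun_prop : Continuous _).intervalIntegrable _ _)
        rw [Real.norm_eq_abs, abs_mul, abs_of_nonneg (sqrt_nonneg _)]
        have htaylor := abs_sub_sub_mul_le_of_abs_deriv_deriv_le (convex_Icc _ _) hf hf' hK
          ⟨by linarith, hc⟩ (Ioc_subset_Icc_self hx)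
        rw [sub_zero] at htaylor
        exact mul_le_mul (sqrt_sq_sub_sq_le hc x) htaylor (abs_nonneg _) hc
    _ = K * c ^ 4 / 3 := by
        simp only [intervalIntegral.integral_const_mul, integral_pow]
        ring

theorem mul_eq_sq_sub_sq_mul_of_isLocalMax {c z d : ℝ} {g : ℝ → ℝ} (hz : z ∈ Ioo (-c) c)
    (hg : HasDerivAt g d z) (hmax : IsLocalMax (fun x => √(c ^ 2 - x ^ 2) * g x) z) :
    z * g z = (c ^ 2 - z ^ 2) * d := by
  have hpos : 0 < c ^ 2 - z ^ 2 := by nlinarith [hz.1, hz.2]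
  have hsqrt : HasDerivAt (fun x => √(c ^ 2 - x ^ 2)) (-(2 * z) / (2 * √(c ^ 2 - z ^ 2))) z := by
    simpa using ((hasDerivAt_pow 2 z).const_sub (c ^ 2)).sqrt hpos.ne'
  have hcrit := hmax.hasDerivAt_eq_zero (hsqrt.mul hg)
  rw [← sq_sqrt hpos.le]
  field_simp at hcrit
  linarith

theorem le_sqrt_sq_sub_sq_mul_le_of_isMaxOn {c z K : ℝ} {g g' : ℝ → ℝ} (hz : z ∈ Ioo (-c) c)
    (hg : ∀ x ∈ Icc (-c) c, HasDerivAt g (g' x) x) (hK : ∀ x ∈ Icc (-c) c, |g' x| ≤ K)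
    (hgz : 1 ≤ g z) (hmax : IsMaxOn (fun x => √(c ^ 2 - x ^ 2) * g x) (Icc (-c) c) z) :
    c * g 0 ≤ √(c ^ 2 - z ^ 2) * g z ∧ √(c ^ 2 - z ^ 2) * g z ≤ c * g 0 + c ^ 3 * K ^ 2 := by
  have hc : 0 ≤ c := by linarith [hz.1, hz.2]
  have h0 : (0 : ℝ) ∈ Icc (-c) c := ⟨by linarith, hc⟩
  have hz' : z ∈ Icc (-c) c := Ioo_subset_Icc_self hz
  have hK0 : 0 ≤ K := (abs_nonneg _).trans (hK z hz')
  have hcrit := mul_eq_sq_sub_sq_mul_of_isLocalMax hz (hg z hz')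
    (hmax.isLocalMax (Icc_mem_nhds hz.1 hz.2))
  have hzle : |z| ≤ c ^ 2 * K := by
    have habs := congrArg abs hcrit
    rw [abs_mul, abs_mul, abs_of_nonneg (show 0 ≤ g z by linarith),
      abs_of_nonneg (show 0 ≤ c ^ 2 - z ^ 2 by nlinarith [hz.1, hz.2])] at habs
    nlinarith [abs_nonneg z, hK z hz', sq_nonneg z, abs_nonneg (g' z)]
  have hgdiff : |g z - g 0| ≤ K * |z - 0| :=
    (convex_Icc _ _).norm_image_sub_le_of_norm_hasDerivWithin_le
      (fun x hx => (hg x hx).hasDerivWithinAt) hK h0 hz'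
  refine ⟨by simpa [sqrt_sq hc] using hmax h0, ?_⟩
  calc √(c ^ 2 - z ^ 2) * g z ≤ c * g z :=
        mul_le_mul_of_nonneg_right (sqrt_sq_sub_sq_le hc z) (by linarith)
    _ ≤ c * (g 0 + K * (c ^ 2 * K)) := by
        rw [sub_zero] at hgdiff
        have hgz_le := (abs_le.mp hgdiff).2
        gcongr
        nlinarith [mul_le_mul_of_nonneg_left hzle hK0]
    _ = c * g 0 + c ^ 3 * K ^ 2 := by ring

theorem stmt_7_general
    (c : ℝ)
    (V V' V'' : ℝ → ℝ)
    (hV1 : ∀ x ∈ Set.Icc (-c) c, HasDerivAt V (V' x) x)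
    (hV2 : ∀ x ∈ Set.Icc (-c) c, HasDerivAt V' (V'' x) x)
    (hVnn : ∀ x ∈ Set.Icc (-c) c, 0 ≤ V x)
    (r v : ℝ → ℝ)
    (hr : ∀ x, r x = Real.sqrt (c ^ 2 - x ^ 2))
    (hv : ∀ x, v x = r x * (1 + V x))
    (z₀ : ℝ) (hz₀ : z₀ ∈ Set.Ioo (-c) c)
    (hmax : ∀ x ∈ Set.Icc (-c) c, v x ≤ v z₀)
    (M' M'' : ℝ)
    (hM' : IsLUB ((fun x => |V' x|) '' Set.Icc (-c) c) M')
    (hM'' : IsLUB ((fun x => |V'' x|) '' Set.Icc (-c) c) M'')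
    (a : ℝ) (ha : a = (1 / Real.pi) * ∫ x in (-c)..c, v x)
    :
    |a - c * v z₀ / 2| ≤ c ^ 4 / 8 * (M'' + 6 * M' ^ 2) := by
  have hc : 0 ≤ c := by linarith [hz₀.1, hz₀.2]
  have h0 : (0 : ℝ) ∈ Icc (-c) c := ⟨by linarith, hc⟩
  obtain rfl : v = fun x => √(c ^ 2 - x ^ 2) * (1 + V x) := funext fun x => by rw [hv, hr]
  have hg : ∀ x ∈ Icc (-c) c, HasDerivAt (fun x => 1 + V x) (V' x) x :=
    fun x hx => (hV1 x hx).const_add 1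
  have hM'b : ∀ x ∈ Icc (-c) c, |V' x| ≤ M' := fun x hx => hM'.1 ⟨x, hx, rfl⟩
  have hM''b : ∀ x ∈ Icc (-c) c, |V'' x| ≤ M'' := fun x hx => hM''.1 ⟨x, hx, rfl⟩
  have hM''0 : 0 ≤ M'' := (abs_nonneg _).trans (hM''b 0 h0)
  have hquad := abs_integral_sqrt_sq_sub_sq_mul_sub_le hc hg hV2 hM''b
  obtain ⟨hlow, hup⟩ := le_sqrt_sq_sub_sq_mul_le_of_isMaxOn hz₀ hg hM'b
    (by linarith [hVnn z₀ (Ioo_subset_Icc_self hz₀)]) (isMaxOn_iff.mpr hmax)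
  set I := ∫ x in -c..c, √(c ^ 2 - x ^ 2) * (1 + V x)
  set h := √(c ^ 2 - z₀ ^ 2) * (1 + V z₀)
  have hI : |a - c ^ 2 * (1 + V 0) / 2| ≤ c ^ 4 / 8 * M'' := by
    rw [ha, show 1 / π * I - c ^ 2 * (1 + V 0) / 2 = (I - π * c ^ 2 / 2 * (1 + V 0)) / π by
      field_simp, abs_div, abs_of_pos pi_pos, div_le_iff₀ pi_pos]
    nlinarith [pi_gt_three, mul_nonneg hM''0 (pow_nonneg hc 4)]
  have hh : |c ^ 2 * (1 + V 0) / 2 - c * h / 2| ≤ c ^ 4 / 8 * (6 * M' ^ 2) := by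
    have hlow' := mul_le_mul_of_nonneg_left hlow hc
    have hup' := mul_le_mul_of_nonneg_left hup hc
    rw [abs_le]
    constructor <;> nlinarith [pow_nonneg hc 4, sq_nonneg M']
  calc |a - c * h / 2| ≤ |a - c ^ 2 * (1 + V 0) / 2| + |c ^ 2 * (1 + V 0) / 2 - c * h / 2| :=
        abs_sub_le _ _ _
    _ ≤ c ^ 4 / 8 * (M'' + 6 * M' ^ 2) := by linarith

theorem stmt_7
    (c : ℝ) (hc : 0 < c)
    (V V' V'' : ℝ → ℝ)
    (hV1 : ∀ x ∈ Set.Icc (-c) c, HasDerivAt V (V' x) x)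
    (hV2 : ∀ x ∈ Set.Icc (-c) c, HasDerivAt V' (V'' x) x)
    (hV2c : ContinuousOn V'' (Set.Icc (-c) c))
    (hVnn : ∀ x ∈ Set.Icc (-c) c, 0 ≤ V x)
    (r v : ℝ → ℝ)
    (hr : ∀ x, r x = Real.sqrt (c ^ 2 - x ^ 2))
    (hv : ∀ x, v x = r x * (1 + V x))
    (z₀ : ℝ) (hz₀ : z₀ ∈ Set.Ioo (-c) c)
    (hmax : ∀ x ∈ Set.Icc (-c) c, v x ≤ v z₀)
    (M M' M'' : ℝ)
    (hM : IsLUB (V '' Set.Icc (-c) c) M)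
    (hM' : IsLUB ((fun x => |V' x|) '' Set.Icc (-c) c) M')
    (hM'' : IsLUB ((fun x => |V'' x|) '' Set.Icc (-c) c) M'')
    (a : ℝ) (ha : a = (1 / Real.pi) * ∫ x in (-c)..c, v x)
    :
    |a - c * v z₀ / 2| ≤ c ^ 4 / 8 * (M'' + 6 * M' ^ 2) :=
  stmt_7_general c V V' V'' hV1 hV2 hVnn r v hr hv z₀ hz₀ hmax M' M'' hM' hM'' a ha
end

section
/- Set m = h²/c. Then |m⁺ − m| ≤ 4c²(1 + M)( M' + (V₀')² √(c |m⁺|) / (4(1 + V₀)²) ), and likewise |m⁻ + m| ≤ 4c²(1 + M)( M' + (V₀')² √(c |m⁻|) / (4(1 + V₀)²) ). -/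
/-!
At the interior maximum `z₀` of `v` the first-order condition reads
`z₀ (1 + V₀) = (c² - z₀²) V₀'`. Since `c m⁺ - h² = c² ((1 + V c)² - (1 + V₀)²) + z₀² (1 + V₀)²`,
the first term is controlled by the mean value theorem, `|V c - V₀| ≤ M' (c - z₀)`, and the second,
which equals `(c² - z₀²)² V₀'²`, by the first-order condition. The bound for `m⁻` is the same
estimate after the reflection `x ↦ -x`.
-/

open Set

theorem IsLocalMax.hasDerivAt_sqrt_mul_eq_zero {g u : ℝ → ℝ} {g' u' z : ℝ}
    (hmax : IsLocalMax (fun x => √(g x) * u x) z) (hg : HasDerivAt g g' z)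
    (hu : HasDerivAt u u' z) (hgz : 0 < g z) : g' * u z + 2 * g z * u' = 0 := by
  have hzero := hmax.hasDerivAt_eq_zero ((hg.sqrt hgz.ne').mul hu)
  field_simp at hzero
  linear_combination hzero - 2 * u' * Real.sq_sqrt hgz.le

theorem mul_one_add_eq_of_isLocalMax {c z q : ℝ} {V : ℝ → ℝ} (hz : z ^ 2 < c ^ 2)
    (hV : HasDerivAt V q z) (hmax : IsLocalMax (fun x => √(c ^ 2 - x ^ 2) * (1 + V x)) z) :
    z * (1 + V z) = (c ^ 2 - z ^ 2) * q := by
  have hg : HasDerivAt (fun x : ℝ => c ^ 2 - x ^ 2) (-(2 * z)) z := by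
    simpa using ((hasDerivAt_id z).pow 2).const_sub (c ^ 2)
  have h := hmax.hasDerivAt_sqrt_mul_eq_zero hg (hV.const_add 1) (sub_pos.mpr hz)
  linear_combination -h / 2

theorem Real.sqrt_mul_abs_mul_sq {c a : ℝ} (hc : 0 ≤ c) (ha : 0 ≤ a) :
    √(c * |c * a ^ 2|) = c * a := by
  rw [abs_of_nonneg (by positivity), ← Real.sqrt_sq (by positivity : 0 ≤ c * a)]
  ring_nf

section Estimates

variable {c z A B M M' q : ℝ}

theorem abs_sq_mul_one_add_sq_sub_le (hA : 0 ≤ A) (hB : 0 ≤ B) (hAM : A ≤ M) (hBM : B ≤ M) :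
    |c ^ 2 * (1 + B) ^ 2 - (c ^ 2 - z ^ 2) * (1 + A) ^ 2| ≤
      2 * c ^ 2 * (1 + M) * |B - A| + z ^ 2 * (1 + A) ^ 2 := by
  calc |c ^ 2 * (1 + B) ^ 2 - (c ^ 2 - z ^ 2) * (1 + A) ^ 2|
      = |c ^ 2 * (2 + A + B) * (B - A) + z ^ 2 * (1 + A) ^ 2| := by ring_nf
    _ ≤ |c ^ 2 * (2 + A + B) * (B - A)| + |z ^ 2 * (1 + A) ^ 2| := abs_add_le _ _
    _ = c ^ 2 * (2 + A + B) * |B - A| + z ^ 2 * (1 + A) ^ 2 := by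
      have hfac : 0 ≤ c ^ 2 * (2 + A + B) := mul_nonneg (sq_nonneg c) (by linarith)
      rw [abs_mul, abs_of_nonneg hfac, abs_of_nonneg (by positivity : 0 ≤ z ^ 2 * (1 + A) ^ 2)]
    _ ≤ 2 * c ^ 2 * (1 + M) * |B - A| + z ^ 2 * (1 + A) ^ 2 := by
      gcongr ?_ * _ + _
      nlinarith [sq_nonneg c]

theorem sq_mul_one_add_sq_le_of_critical (hz : |z| ≤ c) (hA : 0 ≤ A) (hB : 0 ≤ B) (hAM : A ≤ M)
    (hq : |q| ≤ M') (hstat : z * (1 + A) = (c ^ 2 - z ^ 2) * q) :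
    z ^ 2 * (1 + A) ^ 2 ≤
      (1 + M) * (c ^ 4 * (1 + B) * q ^ 2 / (1 + A) ^ 2 + 2 * c ^ 2 * M' * (c + z)) := by
  obtain ⟨hzl, hzu⟩ := abs_le.mp hz
  have hT : 0 ≤ c ^ 2 - z ^ 2 := by nlinarith
  have hsq : z ^ 2 * (1 + A) ^ 2 = (c ^ 2 - z ^ 2) ^ 2 * q ^ 2 := by
    rw [← mul_pow, hstat, mul_pow]
  have hB_term : z ^ 2 * (1 + B) ≤ c ^ 4 * (1 + B) * q ^ 2 / (1 + A) ^ 2 := by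
    rw [le_div_iff₀ (by positivity)]
    have : (c ^ 2 - z ^ 2) ^ 2 ≤ c ^ 4 := by nlinarith [sq_nonneg z]
    nlinarith [mul_le_mul_of_nonneg_right this (by positivity : 0 ≤ (1 + B) * q ^ 2)]
  -- `A - B ≤ 1 + A` and `|z| (1 + A) = (c² - z²) |q|` bound the excess of `A` over `B`.
  have hdiff : z ^ 2 * (A - B) ≤ 2 * c ^ 2 * M' * (c + z) := by
    have h1 : |z| * (A - B) ≤ (c ^ 2 - z ^ 2) * M' := calc
      |z| * (A - B) ≤ |z| * (1 + A) := by gcongr; linarith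
      _ = (c ^ 2 - z ^ 2) * |q| := by
        rw [← abs_of_pos (by linarith : 0 < 1 + A), ← abs_mul, hstat, abs_mul, abs_of_nonneg hT]
      _ ≤ (c ^ 2 - z ^ 2) * M' := by gcongr
    have h2 : |z| * (c - z) ≤ 2 * c ^ 2 := by nlinarith [abs_nonneg z]
    have hM' : 0 ≤ M' := (abs_nonneg q).trans hq
    calc z ^ 2 * (A - B) = |z| * (|z| * (A - B)) := by rw [← mul_assoc, ← sq, sq_abs]
      _ ≤ |z| * ((c ^ 2 - z ^ 2) * M') := by gcongr
      _ = |z| * (c - z) * ((c + z) * M') := by ring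
      _ ≤ 2 * c ^ 2 * ((c + z) * M') := mul_le_mul_of_nonneg_right h2 (by nlinarith)
      _ = 2 * c ^ 2 * M' * (c + z) := by ring
  calc z ^ 2 * (1 + A) ^ 2 ≤ (1 + M) * (z ^ 2 * (1 + A)) := by
        rw [sq (1 + A), ← mul_assoc, mul_comm (1 + M)]; gcongr
    _ = (1 + M) * (z ^ 2 * (1 + B) + z ^ 2 * (A - B)) := by ring
    _ ≤ (1 + M) * (c ^ 4 * (1 + B) * q ^ 2 / (1 + A) ^ 2 + 2 * c ^ 2 * M' * (c + z)) := by
      gcongr; linarith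

theorem abs_mul_one_add_sq_sub_div_le (hc : 0 < c) (hz : |z| ≤ c) (hA : 0 ≤ A) (hB : 0 ≤ B)
    (hAM : A ≤ M) (hBM : B ≤ M) (hq : |q| ≤ M') (hBA : |B - A| ≤ M' * (c - z))
    (hstat : z * (1 + A) = (c ^ 2 - z ^ 2) * q) :
    |c * (1 + B) ^ 2 - (c ^ 2 - z ^ 2) * (1 + A) ^ 2 / c| ≤
      4 * c ^ 2 * (1 + M) * (M' + q ^ 2 * (c * (1 + B)) / (4 * (1 + A) ^ 2)) := by
  have hsplit := abs_sq_mul_one_add_sq_sub_le (c := c) (z := z) hA hB hAM hBM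
  have hcrit := sq_mul_one_add_sq_le_of_critical hz hA hB hAM hq hstat
  have hcM : 0 ≤ 2 * c ^ 2 * (1 + M) := by nlinarith [sq_nonneg c]
  have hlhs : c * (1 + B) ^ 2 - (c ^ 2 - z ^ 2) * (1 + A) ^ 2 / c =
      (c ^ 2 * (1 + B) ^ 2 - (c ^ 2 - z ^ 2) * (1 + A) ^ 2) / c := by
    field_simp
  have hrhs : 4 * c ^ 2 * (1 + M) * (M' + q ^ 2 * (c * (1 + B)) / (4 * (1 + A) ^ 2)) =
      (2 * c ^ 2 * (1 + M) * (M' * (c - z)) +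
        (1 + M) * (c ^ 4 * (1 + B) * q ^ 2 / (1 + A) ^ 2 + 2 * c ^ 2 * M' * (c + z))) / c := by
    field_simp
    ring
  rw [hlhs, hrhs, abs_div, abs_of_pos hc]
  gcongr
  linarith [mul_le_mul_of_nonneg_left hBA hcM]

end Estimates

theorem stmt_14_general
    (c : ℝ) (hc : 0 < c)
    (V V' : ℝ → ℝ)
    (hV1 : ∀ x ∈ Set.Icc (-c) c, HasDerivAt V (V' x) x)
    (hVnn : ∀ x ∈ Set.Icc (-c) c, 0 ≤ V x)
    (r v : ℝ → ℝ)
    (hr : ∀ x, r x = Real.sqrt (c ^ 2 - x ^ 2))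
    (hv : ∀ x, v x = r x * (1 + V x))
    (z₀ : ℝ) (hz₀ : z₀ ∈ Set.Ioo (-c) c)
    (hmax : ∀ x ∈ Set.Icc (-c) c, v x ≤ v z₀)
    (M M' : ℝ)
    (hM : IsLUB (V '' Set.Icc (-c) c) M)
    (hM' : IsLUB ((fun x => |V' x|) '' Set.Icc (-c) c) M')
    (mp mm : ℝ)
    (hmp : mp = c * (1 + V c) ^ 2)
    (hmm : mm = -(c * (1 + V (-c)) ^ 2))
    :
    |mp - (v z₀) ^ 2 / c| ≤ 4 * c ^ 2 * (1 + M) * (M' + (V' z₀) ^ 2 * Real.sqrt (c * |mp|) / (4 * (1 + V z₀) ^ 2)) ∧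
    |mm + (v z₀) ^ 2 / c| ≤ 4 * c ^ 2 * (1 + M) * (M' + (V' z₀) ^ 2 * Real.sqrt (c * |mm|) / (4 * (1 + V z₀) ^ 2)) := by
  have hz : z₀ ∈ Icc (-c) c := Ioo_subset_Icc_self hz₀
  have hcI : c ∈ Icc (-c) c := ⟨by linarith, le_rfl⟩
  have hncI : -c ∈ Icc (-c) c := ⟨le_rfl, by linarith⟩
  have hzc : |z₀| ≤ c := abs_le.mpr hz
  have hbound : ∀ x ∈ Icc (-c) c, V x ≤ M := fun x hx => hM.1 ⟨x, hx, rfl⟩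
  have hq : |V' z₀| ≤ M' := hM'.1 ⟨z₀, hz, rfl⟩
  have hv' : v = fun x => √(c ^ 2 - x ^ 2) * (1 + V x) := funext fun x => by rw [hv, hr]
  have hloc : IsLocalMax (fun x => √(c ^ 2 - x ^ 2) * (1 + V x)) z₀ :=
    hv' ▸ IsMaxOn.isLocalMax hmax (Icc_mem_nhds hz₀.1 hz₀.2)
  have hzsq : z₀ ^ 2 < c ^ 2 := sq_lt_sq' hz₀.1 hz₀.2
  have hstat := mul_one_add_eq_of_isLocalMax hzsq (hV1 z₀ hz) hloc
  have hmvt : ∀ x ∈ Icc (-c) c, |V x - V z₀| ≤ M' * |x - z₀| := fun x hx => by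
    simpa only [Real.norm_eq_abs] using
      (convex_Icc (-c) c).norm_image_sub_le_of_norm_hasDerivWithin_le
        (fun y hy => (hV1 y hy).hasDerivWithinAt) (fun y hy => hM'.1 ⟨y, hy, rfl⟩) hz hx
  have hv2 : v z₀ ^ 2 = (c ^ 2 - z₀ ^ 2) * (1 + V z₀) ^ 2 := by
    rw [hv, hr, mul_pow, Real.sq_sqrt (sub_pos.mpr hzsq).le]
  have hVz := hVnn z₀ hz
  constructor
  · rw [hmp, hv2, Real.sqrt_mul_abs_mul_sq hc.le (by linarith [hVnn c hcI])]
    refine abs_mul_one_add_sq_sub_div_le hc hzc hVz (hVnn c hcI) (hbound z₀ hz) (hbound c hcI) hq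
      ?_ hstat
    simpa [abs_of_pos (sub_pos.mpr hz₀.2)] using hmvt c hcI
  · rw [hmm, hv2, abs_neg, Real.sqrt_mul_abs_mul_sq hc.le (by linarith [hVnn (-c) hncI]),
      neg_add_eq_sub, abs_sub_comm]
    have hmvt' : |V (-c) - V z₀| ≤ M' * (c - -z₀) := by
      simpa [abs_of_neg (by linarith [hz₀.1] : -c - z₀ < 0), add_comm] using hmvt (-c) hncI
    simpa using abs_mul_one_add_sq_sub_div_le (z := -z₀) (q := -V' z₀) hc (by rwa [abs_neg]) hVz
      (hVnn (-c) hncI) (hbound z₀ hz) (hbound (-c) hncI) (by rwa [abs_neg]) hmvt'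
      (by linear_combination -hstat)

theorem stmt_14
    (c : ℝ) (hc : 0 < c)
    (V V' V'' : ℝ → ℝ)
    (hV1 : ∀ x ∈ Set.Icc (-c) c, HasDerivAt V (V' x) x)
    (hV2 : ∀ x ∈ Set.Icc (-c) c, HasDerivAt V' (V'' x) x)
    (hV2c : ContinuousOn V'' (Set.Icc (-c) c))
    (hVnn : ∀ x ∈ Set.Icc (-c) c, 0 ≤ V x)
    (r v : ℝ → ℝ)
    (hr : ∀ x, r x = Real.sqrt (c ^ 2 - x ^ 2))
    (hv : ∀ x, v x = r x * (1 + V x))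
    (z₀ : ℝ) (hz₀ : z₀ ∈ Set.Ioo (-c) c)
    (hmax : ∀ x ∈ Set.Icc (-c) c, v x ≤ v z₀)
    (M M' M'' : ℝ)
    (hM : IsLUB (V '' Set.Icc (-c) c) M)
    (hM' : IsLUB ((fun x => |V' x|) '' Set.Icc (-c) c) M')
    (hM'' : IsLUB ((fun x => |V'' x|) '' Set.Icc (-c) c) M'')
    (mp mm : ℝ)
    (hmp : mp = c * (1 + V c) ^ 2)
    (hmm : mm = -(c * (1 + V (-c)) ^ 2))
    :
    |mp - (v z₀) ^ 2 / c| ≤ 4 * c ^ 2 * (1 + M) * (M' + (V' z₀) ^ 2 * Real.sqrt (c * |mp|) / (4 * (1 + V z₀) ^ 2)) ∧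
    |mm + (v z₀) ^ 2 / c| ≤ 4 * c ^ 2 * (1 + M) * (M' + (V' z₀) ^ 2 * Real.sqrt (c * |mm|) / (4 * (1 + V z₀) ^ 2)) :=
  stmt_14_general c hc V V' hV1 hVnn r v hr hv z₀ hz₀ hmax M M' hM hM' mp mm hmp hmm
end

section
/- For every n ∈ ℤ, the function Vₙ is twice differentiable on gₙ, its second derivative is Vₙ''(x) = (2/π)∫_{g∖gₙ} v(t) / (|t − x|³ vₙ(t)) dt, and 0 ≤ Vₙ''(x) ≤ 2 Vₙ(x)/ρₙ² for all x ∈ gₙ. -/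
/-!
Both derivatives of Vₙ come from differentiating under the integral sign. The set g ∖ gₙ stays at
distance at least ρₙ from gₙ, hence also from its endpoints, so vₙ ≥ ρₙ there and the weight v / vₙ
is integrable on g ∖ gₙ. For y ∈ gₙ the kernel |t - y|⁻¹ and its y-derivatives (t - y) / |t - y|³
and 2 / |t - y|³ are then bounded by powers of ρₙ⁻¹, uniformly in t ∈ g ∖ gₙ, which is what dominated
convergence needs. The upper bound on Vₙ'' follows from 2 / |t - x|³ ≤ (2 / ρₙ²) · |t - x|⁻¹.
-/

open MeasureTheory Filter Set Real

lemma hasDerivAt_abs_const_sub {t x : ℝ} (h : t ≠ x) :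
    HasDerivAt (fun y => |t - y|) (-((t - x) / |t - x|)) x := by
  have hne : t - x ≠ 0 := sub_ne_zero.2 h
  have hsign : (SignType.sign (t - x) : ℝ) = (t - x) / |t - x| := by
    rw [eq_div_iff (abs_ne_zero.2 hne), sign_mul_abs]
  simpa [hsign, Function.comp_def] using
    (hasDerivAt_abs hne).comp x ((hasDerivAt_id x).const_sub t)

lemma hasDerivAt_inv_abs_const_sub {t x : ℝ} (h : t ≠ x) :
    HasDerivAt (fun y => |t - y|⁻¹) ((t - x) / |t - x| ^ 3) x :=
  ((hasDerivAt_abs_const_sub h).inv (abs_ne_zero.2 (sub_ne_zero.2 h))).congr_deriv <| by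
    field_simp

lemma hasDerivAt_const_sub_div_abs_pow_three {t x : ℝ} (h : t ≠ x) :
    HasDerivAt (fun y => (t - y) / |t - y| ^ 3) (2 / |t - x| ^ 3) x := by
  have hne : |t - x| ≠ 0 := abs_ne_zero.2 (sub_ne_zero.2 h)
  refine (((hasDerivAt_id x).const_sub t).div ((hasDerivAt_abs_const_sub h).pow 3)
    (pow_ne_zero 3 hne)).congr_deriv ?_
  simp only [id, Pi.pow_apply]
  field_simp
  linear_combination (-3 * |t - x| ^ 2) * sq_abs (t - x)

lemma csInf_image2_dist_le {α : Type*} [PseudoMetricSpace α] {s t : Set α} {x y : α}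
    (hx : x ∈ s) (hy : y ∈ t) : sInf (image2 dist s t) ≤ dist x y :=
  csInf_le ⟨0, by rintro _ ⟨a, -, b, -, rfl⟩; exact dist_nonneg⟩ (mem_image2_of_mem hx hy)

lemma le_sqrt_abs_sub_mul_abs_sub {a b ρ t : ℝ} (hab : a < b) (hρ : 0 ≤ ρ)
    (h : ∀ y ∈ Ioo a b, ρ ≤ |t - y|) : ρ ≤ √(|t - a| * |t - b|) := by
  have hIcc : Icc a b ⊆ {y | ρ ≤ |t - y|} := closure_Ioo hab.ne ▸
    closure_minimal h (isClosed_le continuous_const (by fun_prop))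
  have ha : ρ ≤ |t - a| := hIcc (left_mem_Icc.2 hab.le)
  have hb : ρ ≤ |t - b| := hIcc (right_mem_Icc.2 hab.le)
  rw [Real.le_sqrt hρ (by positivity)]
  nlinarith

lemma ne_of_le_abs_sub {ρ t y : ℝ} (hρ : 0 < ρ) (h : ρ ≤ |t - y|) : t ≠ y :=
  sub_ne_zero.1 (abs_pos.1 (hρ.trans_le h))

lemma norm_const_sub_div_abs_pow_three {t y : ℝ} (h : t ≠ y) :
    ‖(t - y) / |t - y| ^ 3‖ = (|t - y| ^ 2)⁻¹ := by
  have hne : |t - y| ≠ 0 := abs_ne_zero.2 (sub_ne_zero.2 h)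
  simp only [norm_div, norm_pow, Real.norm_eq_abs, abs_abs]
  field_simp

lemma norm_inv_abs_sub_le {ρ t y : ℝ} (hρ : 0 < ρ) (h : ρ ≤ |t - y|) : ‖|t - y|⁻¹‖ ≤ ρ⁻¹ := by
  rw [norm_inv, Real.norm_eq_abs, abs_abs]
  exact inv_anti₀ hρ h

lemma integrableOn_div_of_le {v u : ℝ → ℝ} {S : Set ℝ} {ρ : ℝ} (hv : Integrable v)
    (hv_nonneg : ∀ t, 0 ≤ v t) (hu : Continuous u) (hS : MeasurableSet S) (hρ : 0 < ρ)
    (hu_ge : ∀ t ∈ S, ρ ≤ u t) : IntegrableOn (fun t => v t / u t) S := by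
  refine Integrable.mono' (hv.integrableOn.div_const ρ)
    (hv.aemeasurable.div hu.aemeasurable).aestronglyMeasurable.restrict ?_
  filter_upwards [ae_restrict_mem hS] with t ht
  rw [Real.norm_eq_abs, abs_of_nonneg (div_nonneg (hv_nonneg t) (hρ.le.trans (hu_ge t ht)))]
  exact div_le_div_of_nonneg_left (hv_nonneg t) hρ (hu_ge t ht)

section Potential

variable {μ : Measure ℝ} {w : ℝ → ℝ} {U : Set ℝ} {ρ x : ℝ}

lemma hasDerivAt_integral_mul_of_separated {K K' : ℝ → ℝ → ℝ} {C C' : ℝ}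
    (hw : Integrable w μ) (hU : IsOpen U) (hx : x ∈ U) (hsep : ∀ᵐ t ∂μ, ∀ y ∈ U, ρ ≤ |t - y|)
    (hK_meas : ∀ y, Measurable (K y)) (hK'_meas : Measurable (K' x))
    (hK_le : ∀ t y, ρ ≤ |t - y| → ‖K y t‖ ≤ C) (hK'_le : ∀ t y, ρ ≤ |t - y| → ‖K' y t‖ ≤ C')
    (hK' : ∀ t y, ρ ≤ |t - y| → HasDerivAt (fun z => K z t) (K' y t) y) :
    HasDerivAt (fun y => ∫ t, w t * K y t ∂μ) (∫ t, w t * K' x t ∂μ) x := by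
  refine (hasDerivAt_integral_of_dominated_loc_of_deriv_le (bound := fun t => C' * ‖w t‖)
    (hU.mem_nhds hx)
    (Eventually.of_forall fun y => hw.aestronglyMeasurable.mul (hK_meas y).aestronglyMeasurable)
    (hw.mul_bdd (hK_meas x).aestronglyMeasurable (hsep.mono fun t ht => hK_le t x (ht x hx)))
    (hw.aestronglyMeasurable.mul hK'_meas.aestronglyMeasurable) ?_ (hw.norm.const_mul C')
    (hsep.mono fun t ht y hy => (hK' t y (ht y hy)).const_mul (w t))).2
  refine hsep.mono fun t ht y hy => ?_
  rw [norm_mul, mul_comm]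
  exact mul_le_mul_of_nonneg_right (hK'_le t y (ht y hy)) (norm_nonneg _)

lemma hasDerivAt_integral_mul_inv_abs_sub (hρ : 0 < ρ) (hw : Integrable w μ) (hU : IsOpen U)
    (hx : x ∈ U) (hsep : ∀ᵐ t ∂μ, ∀ y ∈ U, ρ ≤ |t - y|) :
    HasDerivAt (fun y => ∫ t, w t * |t - y|⁻¹ ∂μ) (∫ t, w t * ((t - x) / |t - x| ^ 3) ∂μ) x := by
  refine hasDerivAt_integral_mul_of_separated (C := ρ⁻¹) (C' := (ρ ^ 2)⁻¹) hw hU hx hsep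
    (fun y => by fun_prop) (by fun_prop) (fun t y h => ?_) (fun t y h => ?_)
    (fun t y h => hasDerivAt_inv_abs_const_sub (ne_of_le_abs_sub hρ h))
  · exact norm_inv_abs_sub_le hρ h
  · rw [norm_const_sub_div_abs_pow_three (ne_of_le_abs_sub hρ h)]
    exact inv_anti₀ (by positivity) (pow_le_pow_left₀ hρ.le h 2)

lemma hasDerivAt_integral_mul_const_sub_div_abs_pow_three (hρ : 0 < ρ) (hw : Integrable w μ)
    (hU : IsOpen U) (hx : x ∈ U) (hsep : ∀ᵐ t ∂μ, ∀ y ∈ U, ρ ≤ |t - y|) :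
    HasDerivAt (fun y => ∫ t, w t * ((t - y) / |t - y| ^ 3) ∂μ)
      (∫ t, w t * (2 / |t - x| ^ 3) ∂μ) x := by
  refine hasDerivAt_integral_mul_of_separated (C := (ρ ^ 2)⁻¹) (C' := 2 / ρ ^ 3) hw hU hx hsep
    (fun y => by fun_prop) (by fun_prop) (fun t y h => ?_) (fun t y h => ?_)
    (fun t y h => hasDerivAt_const_sub_div_abs_pow_three (ne_of_le_abs_sub hρ h))
  · rw [norm_const_sub_div_abs_pow_three (ne_of_le_abs_sub hρ h)]
    exact inv_anti₀ (by positivity) (pow_le_pow_left₀ hρ.le h 2)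
  · simp only [norm_div, norm_pow, Real.norm_eq_abs, abs_abs, abs_two]
    exact div_le_div_of_nonneg_left zero_le_two (by positivity) (pow_le_pow_left₀ hρ.le h 3)

lemma hasDerivAt_deriv_integral_mul_inv_abs_sub (hρ : 0 < ρ) (hw : Integrable w μ)
    (hU : IsOpen U) (hx : x ∈ U) (hsep : ∀ᵐ t ∂μ, ∀ y ∈ U, ρ ≤ |t - y|) :
    HasDerivAt (deriv fun y => ∫ t, w t * |t - y|⁻¹ ∂μ) (∫ t, w t * (2 / |t - x| ^ 3) ∂μ) x :=
  (hasDerivAt_integral_mul_const_sub_div_abs_pow_three hρ hw hU hx hsep).congr_of_eventuallyEq <|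
    eventually_of_mem (hU.mem_nhds hx) fun _ hy =>
      (hasDerivAt_integral_mul_inv_abs_sub hρ hw hU hy hsep).deriv

lemma integrable_mul_inv_abs_sub (hρ : 0 < ρ) (hw : Integrable w μ)
    (hsep : ∀ᵐ t ∂μ, ρ ≤ |t - x|) : Integrable (fun t => w t * |t - x|⁻¹) μ :=
  hw.mul_bdd (by fun_prop) (hsep.mono fun _ ht => norm_inv_abs_sub_le hρ ht)

lemma integral_mul_two_div_abs_pow_three_le (hρ : 0 < ρ) (hw : Integrable w μ)
    (hw_nonneg : 0 ≤ᵐ[μ] w) (hsep : ∀ᵐ t ∂μ, ρ ≤ |t - x|) :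
    ∫ t, w t * (2 / |t - x| ^ 3) ∂μ ≤ 2 / ρ ^ 2 * ∫ t, w t * |t - x|⁻¹ ∂μ := by
  rw [← integral_const_mul]
  refine integral_mono_of_nonneg ?_ ((integrable_mul_inv_abs_sub hρ hw hsep).const_mul _) ?_
  · filter_upwards [hw_nonneg] with t ht
    exact mul_nonneg ht (by positivity)
  · filter_upwards [hw_nonneg, hsep] with t hwt ht
    have hpos : 0 < |t - x| := hρ.trans_le ht
    calc w t * (2 / |t - x| ^ 3) = 2 / |t - x| ^ 2 * (w t * |t - x|⁻¹) := by
          field_simp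
      _ ≤ 2 / ρ ^ 2 * (w t * |t - x|⁻¹) := by
          gcongr
          exact mul_nonneg hwt (by positivity)

end Potential

theorem stmt_17_general
    (zm zp : ℤ → ℝ)
    (v : ℝ → ℝ)
    (hvint : MeasureTheory.Integrable v)
    (hvnn : ∀ t, 0 ≤ v t)
    (vn : ℤ → ℝ → ℝ)
    (hvn : ∀ n x, vn n x = Real.sqrt (|x - zm n| * |x - zp n|))
    (ρ : ℤ → ℝ)
    (hρ : ∀ n, ρ n = sInf (Set.image2 dist (Set.Ioo (zm n) (zp n))
      ((⋃ m : ℤ, Set.Ioo (zm m) (zp m)) \ Set.Ioo (zm n) (zp n))))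
    (hρpos : ∀ n, 0 < ρ n)
    (Vn : ℤ → ℝ → ℝ)
    (hVn : ∀ n x, Vn n x = (1 / Real.pi) *
      ∫ t in ((⋃ m : ℤ, Set.Ioo (zm m) (zp m)) \ Set.Ioo (zm n) (zp n)),
        v t / (|t - x| * vn n t))
    :
    ∀ n : ℤ, ∀ x ∈ Set.Ioo (zm n) (zp n),
      DifferentiableAt ℝ (Vn n) x ∧
      HasDerivAt (deriv (Vn n)) ((2 / Real.pi) *
        ∫ t in ((⋃ m : ℤ, Set.Ioo (zm m) (zp m)) \ Set.Ioo (zm n) (zp n)),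
          v t / (|t - x| ^ 3 * vn n t)) x ∧
      0 ≤ (2 / Real.pi) *
        ∫ t in ((⋃ m : ℤ, Set.Ioo (zm m) (zp m)) \ Set.Ioo (zm n) (zp n)),
          v t / (|t - x| ^ 3 * vn n t) ∧
      (2 / Real.pi) *
        ∫ t in ((⋃ m : ℤ, Set.Ioo (zm m) (zp m)) \ Set.Ioo (zm n) (zp n)),
          v t / (|t - x| ^ 3 * vn n t) ≤ 2 * Vn n x / ρ n ^ 2 := by
  intro n x hx
  set S := (⋃ m : ℤ, Ioo (zm m) (zp m)) \ Ioo (zm n) (zp n)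
  have hSm : MeasurableSet S :=
    (MeasurableSet.iUnion fun _ => measurableSet_Ioo).diff measurableSet_Ioo
  have hsepS : ∀ t ∈ S, ∀ y ∈ Ioo (zm n) (zp n), ρ n ≤ |t - y| := fun t ht y hy => by
    rw [hρ n, abs_sub_comm, ← Real.dist_eq]
    exact csInf_image2_dist_le hy ht
  have hsep : ∀ᵐ t ∂volume.restrict S, ∀ y ∈ Ioo (zm n) (zp n), ρ n ≤ |t - y| :=
    (ae_restrict_mem hSm).mono hsepS
  have hvn_ge : ∀ t ∈ S, ρ n ≤ vn n t := fun t ht =>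
    hvn n t ▸ le_sqrt_abs_sub_mul_abs_sub (hx.1.trans hx.2) (hρpos n).le (hsepS t ht)
  have hvn_cont : Continuous (vn n) := by
    rw [funext (hvn n)]
    fun_prop
  set w := fun t => v t / vn n t
  have hw_nonneg : 0 ≤ᵐ[volume.restrict S] w :=
    ae_of_all _ fun t => div_nonneg (hvnn t) (hvn n t ▸ Real.sqrt_nonneg _)
  have hw : IntegrableOn w S :=
    integrableOn_div_of_le hvint hvnn hvn_cont hSm (hρpos n) hvn_ge
  have hVn_eq : Vn n = fun y => π⁻¹ * ∫ t in S, w t * |t - y|⁻¹ := by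
    ext y
    rw [hVn, one_div]
    congr 2 with t
    ring
  have hI : 2 / π * ∫ t in S, v t / (|t - x| ^ 3 * vn n t)
      = π⁻¹ * ∫ t in S, w t * (2 / |t - x| ^ 3) := by
    have hintegrand : ∀ t, w t * (2 / |t - x| ^ 3) = 2 * (v t / (|t - x| ^ 3 * vn n t)) :=
      fun t => by ring
    simp_rw [hintegrand, integral_const_mul]
    ring
  rw [hI, hVn_eq, deriv_const_mul_field']
  refine ⟨?_, ?_, ?_, ?_⟩
  · exact ((hasDerivAt_integral_mul_inv_abs_sub (hρpos n) hw isOpen_Ioo hx hsep).const_mul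
      _).differentiableAt
  · exact (hasDerivAt_deriv_integral_mul_inv_abs_sub (hρpos n) hw isOpen_Ioo hx hsep).const_mul _
  · exact mul_nonneg (by positivity)
      (integral_nonneg_of_ae (hw_nonneg.mono fun t ht => mul_nonneg ht (by positivity)))
  · calc π⁻¹ * ∫ t in S, w t * (2 / |t - x| ^ 3)
        ≤ π⁻¹ * (2 / ρ n ^ 2 * ∫ t in S, w t * |t - x|⁻¹) :=
          mul_le_mul_of_nonneg_left (integral_mul_two_div_abs_pow_three_le (hρpos n) hw hw_nonneg
            (hsep.mono fun t ht => ht x hx)) (by positivity)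
      _ = _ := by ring

theorem stmt_17
    (zm zp : ℤ → ℝ)
    (hz : ∀ n, zm n < zp n)
    (hsep : ∀ n, zp n < zm (n + 1))
    (v : ℝ → ℝ)
    (hvmeas : Measurable v)
    (hvint : MeasureTheory.Integrable v)
    (hvnn : ∀ t, 0 ≤ v t)
    (hvsupp : ∀ t ∉ ⋃ n : ℤ, Set.Ioo (zm n) (zp n), v t = 0)
    (vn : ℤ → ℝ → ℝ)
    (hvn : ∀ n x, vn n x = Real.sqrt (|x - zm n| * |x - zp n|))
    (ρ : ℤ → ℝ)
    (hρ : ∀ n, ρ n = sInf (Set.image2 dist (Set.Ioo (zm n) (zp n))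
      ((⋃ m : ℤ, Set.Ioo (zm m) (zp m)) \ Set.Ioo (zm n) (zp n))))
    (hρpos : ∀ n, 0 < ρ n)
    (Vn : ℤ → ℝ → ℝ)
    (hVn : ∀ n x, Vn n x = (1 / Real.pi) *
      ∫ t in ((⋃ m : ℤ, Set.Ioo (zm m) (zp m)) \ Set.Ioo (zm n) (zp n)),
        v t / (|t - x| * vn n t))
    :
    ∀ n : ℤ, ∀ x ∈ Set.Ioo (zm n) (zp n),
      DifferentiableAt ℝ (Vn n) x ∧
      HasDerivAt (deriv (Vn n)) ((2 / Real.pi) *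
        ∫ t in ((⋃ m : ℤ, Set.Ioo (zm m) (zp m)) \ Set.Ioo (zm n) (zp n)),
          v t / (|t - x| ^ 3 * vn n t)) x ∧
      0 ≤ (2 / Real.pi) *
        ∫ t in ((⋃ m : ℤ, Set.Ioo (zm m) (zp m)) \ Set.Ioo (zm n) (zp n)),
          v t / (|t - x| ^ 3 * vn n t) ∧
      (2 / Real.pi) *
        ∫ t in ((⋃ m : ℤ, Set.Ioo (zm m) (zp m)) \ Set.Ioo (zm n) (zp n)),
          v t / (|t - x| ^ 3 * vn n t) ≤ 2 * Vn n x / ρ n ^ 2 :=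
  stmt_17_general zm zp v hvint hvnn vn hvn ρ hρ hρpos Vn hVn
end
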